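/- arXiv:2509.02354 — 5 statements merged into one kernel-verified Lean document; each statement's English description precedes it below -/
import Mathlib

section
/- Let N ≥ 2 and ω = exp(2πi/N). For integers 0 ≤ n < N, the q-Pochhammer symbols satisfy (ω; ω)_n · (ω̄; ω̄)_{N-1-n} = N, where (q;q)_k = ∏_{j=1}^{k}(1 - q^j) and ω̄ is the complex conjugate of ω. -/
open Complex Finset

/-! Since `ω̄ = ω⁻¹` and `ω⁻¹ ^ k = ω ^ (N - k)`, the factors of `(ω̄; ω̄)_{N-1-n}` are, in reverse
order, the factors `1 - ω ^ k` with `n < k < N`. The product is therefore `∏_{0<k<N} (1 - ω ^ k)`,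
which is the value at `1` of `(X ^ N - 1) / (X - 1) = ∏_{0<k<N} (X - ω ^ k)`, namely `N`. -/

lemma inv_pow_eq_pow_sub_of_pow_eq_one {G₀ : Type*} [GroupWithZero G₀] {ζ : G₀} {N k : ℕ}
    (hζ : ζ ^ N = 1) (hk : k ≤ N) : ζ⁻¹ ^ k = ζ ^ (N - k) := by
  rcases Nat.eq_zero_or_pos k with rfl | hk0
  · simp [hζ]
  have hζ0 : ζ ≠ 0 := by
    rintro rfl
    exact zero_ne_one (by rwa [zero_pow (by omega)] at hζ)
  rw [pow_sub₀ _ hζ0 hk, hζ, one_mul, inv_pow]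

lemma prod_range_one_sub_pow_mul_prod_range_one_sub_inv_pow {K : Type*} [Field K] {ζ : K}
    {N n : ℕ} (hζ : ζ ^ N = 1) (hn : n < N) :
    (∏ j ∈ range n, (1 - ζ ^ (j + 1))) * ∏ j ∈ range (N - 1 - n), (1 - ζ⁻¹ ^ (j + 1)) =
      ∏ j ∈ range (N - 1), (1 - ζ ^ (j + 1)) := by
  have hreflect : ∏ j ∈ range (N - 1 - n), (1 - ζ⁻¹ ^ (j + 1)) =
      ∏ j ∈ range (N - 1 - n), (1 - ζ ^ (n + j + 1)) := by
    rw [← prod_range_reflect (fun j ↦ 1 - ζ ^ (n + j + 1))]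
    refine prod_congr rfl fun j hj ↦ ?_
    rw [mem_range] at hj
    rw [inv_pow_eq_pow_sub_of_pow_eq_one hζ (by omega)]
    congr 2
    omega
  rw [hreflect, ← prod_range_add (fun j ↦ 1 - ζ ^ (j + 1)), Nat.add_sub_of_le (by omega)]

theorem stmt_3_general (N : ℕ) (n : ℕ) (hn : n < N)
    (ω ωb : ℂ) (hω : ω = Complex.exp (2 * Real.pi * I / N))
    (hωb : ωb = starRingEnd ℂ ω) :
    (∏ j ∈ Finset.range n, (1 - ω ^ (j + 1))) *
      (∏ j ∈ Finset.range (N - 1 - n), (1 - ωb ^ (j + 1))) = (N : ℂ) := by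
  obtain ⟨M, rfl⟩ : ∃ M, N = M + 1 := ⟨N - 1, by omega⟩
  have hprim : IsPrimitiveRoot ω (M + 1) := hω ▸ isPrimitiveRoot_exp (M + 1) M.succ_ne_zero
  have hωb_inv : ωb = ω⁻¹ := by
    rw [hωb, RCLike.inv_eq_conj (hprim.norm'_eq_one M.succ_ne_zero)]
  rw [hωb_inv, prod_range_one_sub_pow_mul_prod_range_one_sub_inv_pow hprim.pow_eq_one hn,
    Nat.add_sub_cancel]
  exact_mod_cast hprim.prod_one_sub_pow_eq_order

/-- With `ω = exp(2πi/N)` and `ω̄` its complex conjugate, for `0 ≤ n < N` one has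
`(ω;ω)_n (ω̄;ω̄)_{N-1-n} = N`, where `(q;q)_k = ∏_{j=1}^{k} (1 - q^j)`. -/
theorem stmt_3 (N : ℕ) (hN : 2 ≤ N) (n : ℕ) (hn : n < N)
    (ω ωb : ℂ) (hω : ω = Complex.exp (2 * Real.pi * I / N))
    (hωb : ωb = starRingEnd ℂ ω) :
    (∏ j ∈ Finset.range n, (1 - ω ^ (j + 1))) *
      (∏ j ∈ Finset.range (N - 1 - n), (1 - ωb ^ (j + 1))) = (N : ℂ) :=
  stmt_3_general N n hn ω ωb hω hωb
end

section
/- Let N ≥ 2, ω = exp(2πi/N), and let V(α, β, μ) be the N-dimensional module over quantum sl₂ at ξ = exp(πi/N) defined via φ and the cyclic Weyl module, with K v_n = ω^{α-n} v_n, and suppose ω^{N(μ-α)} ≠ 1 and ω^{N(μ+α)} ≠ 1 (so α ≢ ±μ mod N relative to N-th powers). Then V(α,β,μ) is a simple U_ξ(sl₂)-module. -/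
/-!
Since the eigenvalues `ω^{α-n}` of `K` are pairwise distinct, suitable polynomials in `K` project
any nonzero vector of an invariant subspace onto a nonzero multiple of some basis vector `v_n`.
`F` is a cyclic weighted shift `v_n ↦ c_n v_{n+1}`, and its weights `ω^{-β}(1 - ω^{n-μ-α})`
never vanish because `ω^{N(μ+α)} ≠ 1`; so from one `v_n` it reaches all of them.
-/

open Complex

namespace Submodule

variable {ι k : Type*} [Field k] [DecidableEq ι]

theorem eq_top_of_forall_single_mem [Finite ι] {p : Submodule k (ι → k)}
    (h : ∀ i, Pi.single i 1 ∈ p) : p = ⊤ := by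
  rw [eq_top_iff, ← (Pi.basisFun k ι).span_eq, span_le]
  rintro _ ⟨i, rfl⟩
  simpa using h i

section Diagonal

variable {p : Submodule k (ι → k)} {T : (ι → k) →ₗ[k] (ι → k)} {lam : ι → k}

theorem exists_mem_apply_eq_prod_mul (hT : ∀ f i, T f i = lam i * f i)
    (hp : ∀ f ∈ p, T f ∈ p) {f : ι → k} (hf : f ∈ p) (S : Finset ι) :
    ∃ g ∈ p, ∀ i, g i = (∏ m ∈ S, (lam i - lam m)) * f i := by
  induction S using Finset.induction_on with
  | empty => exact ⟨f, hf, by simp⟩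
  | insert a S ha ih =>
    obtain ⟨g, hg, hgi⟩ := ih
    refine ⟨T g - lam a • g, sub_mem (hp g hg) (smul_mem p _ hg), fun i => ?_⟩
    rw [Pi.sub_apply, Pi.smul_apply, smul_eq_mul, hT, hgi, Finset.prod_insert ha]
    ring

theorem single_mem_of_apply_ne_zero [Fintype ι] (hT : ∀ f i, T f i = lam i * f i)
    (hp : ∀ f ∈ p, T f ∈ p) (hlam : Function.Injective lam) {f : ι → k} (hf : f ∈ p) {i : ι}
    (hi : f i ≠ 0) : Pi.single i 1 ∈ p := by
  obtain ⟨g, hg, hgj⟩ := exists_mem_apply_eq_prod_mul hT hp hf (Finset.univ.erase i)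
  set c := ∏ m ∈ Finset.univ.erase i, (lam i - lam m)
  have hc : c ≠ 0 := Finset.prod_ne_zero_iff.2 fun m hm =>
    sub_ne_zero.2 (hlam.ne (Finset.ne_of_mem_erase hm).symm)
  have hg_eq : g = (c * f i) • Pi.single i 1 := by
    ext j
    rcases eq_or_ne j i with rfl | hj
    · simp [hgj, c]
    · rw [hgj, Finset.prod_eq_zero (Finset.mem_erase.2 ⟨hj, Finset.mem_univ j⟩) (sub_self _)]
      simp [hj]
  exact (p.smul_mem_iff (mul_ne_zero hc hi)).1 (hg_eq ▸ hg)

end Diagonal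

section Shift

variable [AddGroup ι] {p : Submodule k (ι → k)} {S : (ι → k) →ₗ[k] (ι → k)} {c : ι → k} {a : ι}

theorem single_add_mem_of_shift (hS : ∀ f i, S f i = c i * f (i - a)) (hc : ∀ i, c i ≠ 0)
    (hp : ∀ f ∈ p, S f ∈ p) {j : ι} (hj : Pi.single j 1 ∈ p) : Pi.single (j + a) 1 ∈ p := by
  have hSj : S (Pi.single j 1) = c (j + a) • Pi.single (j + a) 1 := by
    ext i
    simp only [hS, Pi.single_apply, sub_eq_iff_eq_add, Pi.smul_apply, smul_eq_mul]
    split_ifs with h <;> simp [h]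
  exact (p.smul_mem_iff (hc _)).1 (hSj ▸ hp _ hj)

end Shift

theorem forall_single_mem_of_shift_one {N : ℕ} [NeZero N] {p : Submodule k (ZMod N → k)}
    {S : (ZMod N → k) →ₗ[k] (ZMod N → k)} {c : ZMod N → k}
    (hS : ∀ f n, S f n = c n * f (n - 1)) (hc : ∀ n, c n ≠ 0) (hp : ∀ f ∈ p, S f ∈ p)
    {j : ZMod N} (hj : Pi.single j 1 ∈ p) (n : ZMod N) : Pi.single n 1 ∈ p := by
  have hadd : ∀ m : ℕ, Pi.single (j + m) 1 ∈ p := fun m => by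
    induction m with
    | zero => simpa using hj
    | succ m ih => simpa [add_assoc] using single_add_mem_of_shift hS hc hp ih
  simpa using hadd (n - j).val

end Submodule

theorem Complex.exp_two_pi_I_mul_sub_natCast_div (α : ℂ) (N m : ℕ) :
    exp (2 * Real.pi * I * (α - m) / N) =
      exp (2 * Real.pi * I * α / N) * (exp (2 * Real.pi * I / N) ^ m)⁻¹ := by
  rw [← exp_nat_mul, ← exp_neg, ← exp_add]
  ring_nf

theorem Complex.injective_exp_two_pi_I_mul_sub_val_div (N : ℕ) [NeZero N] (α : ℂ) :
    Function.Injective fun n : ZMod N => exp (2 * Real.pi * I * (α - n.val) / N) := by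
  intro a b h
  simp only [exp_two_pi_I_mul_sub_natCast_div, mul_right_inj' (exp_ne_zero _), inv_inj] at h
  exact ZMod.val_injective N <|
    (isPrimitiveRoot_exp N (NeZero.ne N)).pow_inj (ZMod.val_lt a) (ZMod.val_lt b) h

theorem Complex.exp_two_pi_I_mul_neg_add_natCast_div_ne_one {z : ℂ}
    (hz : exp (2 * Real.pi * I * z) ≠ 1) (N : ℕ) [NeZero N] (m : ℕ) :
    exp (2 * Real.pi * I * (-z + m) / N) ≠ 1 := by
  intro h
  apply hz
  have hN := congrArg (· ^ N) h
  have hexponent : (N : ℂ) * (2 * Real.pi * I * (-z + m) / N) =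
      -(2 * Real.pi * I * z) + m * (2 * Real.pi * I) := by
    field_simp [NeZero.ne N]
  simp only [one_pow, ← exp_nat_mul] at hN
  rwa [hexponent, exp_add, exp_nat_mul_two_pi_mul_I, mul_one, exp_neg, inv_eq_one] at hN

theorem stmt_9_general (N : ℕ) (hN : 2 ≤ N) (α β μ : ℂ)
    (ωpow : ℂ → ℂ) (hωpow : ∀ ζ : ℂ, ωpow ζ = Complex.exp (2 * Real.pi * I * ζ / N))
    (hpar2 : Complex.exp (2 * Real.pi * I * (μ + α)) ≠ 1)
    (K F : (ZMod N → ℂ) →ₗ[ℂ] (ZMod N → ℂ))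
    (hK : ∀ f n, K f n = ωpow (α - (ZMod.val n : ℂ)) * f n)
    (hF : ∀ f n, F f n =
      ωpow (-β) * (1 - ωpow (-μ - α + (ZMod.val (n - 1) : ℂ))) * f (n - 1))
    (p : Submodule ℂ (ZMod N → ℂ))
    (hpK : ∀ f ∈ p, K f ∈ p) (hpF : ∀ f ∈ p, F f ∈ p) :
    p = ⊥ ∨ p = ⊤ := by
  have : NeZero N := ⟨by omega⟩
  simp only [hωpow] at hK hF
  refine or_iff_not_imp_left.2 fun hp => ?_
  obtain ⟨f, hf, hf0⟩ := p.ne_bot_iff.1 hp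
  obtain ⟨n, hn⟩ := Function.ne_iff.1 hf0
  have hsingle := p.single_mem_of_apply_ne_zero hK hpK
    (injective_exp_two_pi_I_mul_sub_val_div N α) hf hn
  have hweight (n : ZMod N) : exp (2 * Real.pi * I * -β / N) *
      (1 - exp (2 * Real.pi * I * (-μ - α + (n - 1).val) / N)) ≠ 0 := by
    refine mul_ne_zero (exp_ne_zero _) (sub_ne_zero.2 (Ne.symm ?_))
    simpa only [neg_add'] using exp_two_pi_I_mul_neg_add_natCast_div_ne_one hpar2 N (n - 1).val
  exact p.eq_top_of_forall_single_mem (p.forall_single_mem_of_shift_one hF hweight hpF hsingle)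

/-- Simplicity of the cyclic module `V(α,β,μ)`: with `ξ = exp(πi/N)`,
`ω^ζ = exp(2πiζ/N)`, the `U_ξ(sl₂)`-module structure on `ℂ^N` obtained via
`φ(K) = x`, `φ(E) = ξ y (z - x)`, `φ(F) = y⁻¹(1 - z⁻¹x⁻¹)` from
`x v_n = ω^{α-n} v_n`, `y v_n = ω^β v_{n-1}`, `z v_n = ω^μ v_n` (written here in
coordinates) has no proper nonzero submodule, provided `ω^{N(μ-α)} ≠ 1` and
`ω^{N(μ+α)} ≠ 1`. -/
theorem stmt_9 (N : ℕ) (hN : 2 ≤ N) (α β μ : ℂ)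
    (ωpow : ℂ → ℂ) (hωpow : ∀ ζ : ℂ, ωpow ζ = Complex.exp (2 * Real.pi * I * ζ / N))
    (hpar1 : Complex.exp (2 * Real.pi * I * (μ - α)) ≠ 1)
    (hpar2 : Complex.exp (2 * Real.pi * I * (μ + α)) ≠ 1)
    (K E F : (ZMod N → ℂ) →ₗ[ℂ] (ZMod N → ℂ))
    (hK : ∀ f n, K f n = ωpow (α - (ZMod.val n : ℂ)) * f n)
    (hE : ∀ f n, E f n =
      Complex.exp (Real.pi * I / N) * ωpow β *
        (ωpow μ - ωpow (α - (ZMod.val (n + 1) : ℂ))) * f (n + 1))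
    (hF : ∀ f n, F f n =
      ωpow (-β) * (1 - ωpow (-μ - α + (ZMod.val (n - 1) : ℂ))) * f (n - 1))
    (p : Submodule ℂ (ZMod N → ℂ))
    (hpK : ∀ f ∈ p, K f ∈ p) (hpE : ∀ f ∈ p, E f ∈ p) (hpF : ∀ f ∈ p, F f ∈ p) :
    p = ⊥ ∨ p = ⊤ :=
  stmt_9_general N hN α β μ ωpow hωpow hpar2 K F hK hF p hpK hpF
end

section
/- In the division ring of U_q(sl₂)⊗U_q(sl₂), define R on generators by R(K⊗1) = (K⊗1)(1 - q^{-1}(K^{-1}E ⊗ FK)), R(E⊗1) = E⊗K, R(1⊗F) = K^{-1}⊗F, and require R∘Δ = Δ^op. Then necessarily R(1⊗K) = (1 - q^{-1}(K^{-1}E⊗FK))^{-1}(1⊗K), and R(1⊗E) = E⊗1 + K⊗E - (E⊗K²)(1 - q(K^{-1}E⊗FK))^{-1}. -/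
/-- In the division ring of `U_q(sl₂)⊗U_q(sl₂)` (abstractly: a division ring `D`
containing central `q` and images `Kᵢ, Eᵢ, Fᵢ` of the two tensor legs with the
quantum-group relations, the two legs commuting), if a ring automorphism `R`
satisfies `R(K₁) = K₁(1 - q⁻¹K₁⁻¹E₁F₂K₂)`, `R(E₁) = E₁K₂`, `R(F₂) = K₁⁻¹F₂`
and intertwines the coproduct with its opposite on the generators `K`, `E`
(`R(K₁K₂) = K₁K₂`, `R(E₁K₂ + E₂) = K₁E₂ + E₁`), then necessarily
`R(K₂) = (1 - q⁻¹K₁⁻¹E₁F₂K₂)⁻¹K₂` and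
`R(E₂) = E₁ + K₁E₂ - E₁K₂²(1 - qK₁⁻¹E₁F₂K₂)⁻¹`. -/
theorem stmt_11 (D : Type*) [DivisionRing D]
    (q K₁ K₂ E₁ E₂ F₁ F₂ : D)
    (hq : q ≠ 0) (hqc : ∀ a : D, q * a = a * q)
    (hK₁ : K₁ ≠ 0) (hK₂ : K₂ ≠ 0)
    -- quantum sl₂ relations in each tensor leg
    (hKE₁ : K₁ * E₁ = q ^ 2 * (E₁ * K₁)) (hKF₁ : K₁ * F₁ = q⁻¹ ^ 2 * (F₁ * K₁))
    (hEF₁ : E₁ * F₁ - F₁ * E₁ = (q - q⁻¹) * (K₁ - K₁⁻¹))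
    (hKE₂ : K₂ * E₂ = q ^ 2 * (E₂ * K₂)) (hKF₂ : K₂ * F₂ = q⁻¹ ^ 2 * (F₂ * K₂))
    (hEF₂ : E₂ * F₂ - F₂ * E₂ = (q - q⁻¹) * (K₂ - K₂⁻¹))
    -- the two tensor legs commute
    (hcomm : ∀ a ∈ ({K₁, K₁⁻¹, E₁, F₁} : Set D), ∀ b ∈ ({K₂, K₂⁻¹, E₂, F₂} : Set D),
      a * b = b * a)
    (R : D ≃+* D)
    (hRK₁ : R K₁ = K₁ * (1 - q⁻¹ * (K₁⁻¹ * E₁ * (F₂ * K₂))))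
    (hRE₁ : R E₁ = E₁ * K₂)
    (hRF₂ : R F₂ = K₁⁻¹ * F₂)
    (hRKK : R (K₁ * K₂) = K₁ * K₂)
    (hRΔE : R (E₁ * K₂ + E₂) = K₁ * E₂ + E₁)
    (hg : 1 - q⁻¹ * (K₁⁻¹ * E₁ * (F₂ * K₂)) ≠ 0)
    (hg' : 1 - q * (K₁⁻¹ * E₁ * (F₂ * K₂)) ≠ 0) :
    R K₂ = (1 - q⁻¹ * (K₁⁻¹ * E₁ * (F₂ * K₂)))⁻¹ * K₂ ∧
    R E₂ = E₁ + K₁ * E₂ - E₁ * K₂ ^ 2 * (1 - q * (K₁⁻¹ * E₁ * (F₂ * K₂)))⁻¹ := by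

  -- abbreviations
  have e₁ : K₁⁻¹ * K₂ = K₂ * K₁⁻¹ := hcomm _ (by simp) _ (by simp)
  have e₂ : E₁ * K₂ = K₂ * E₁ := hcomm _ (by simp) _ (by simp)
  have hq1 : ∀ a : D, q⁻¹ * a = a * q⁻¹ := by
    intro a
    have h1 : q⁻¹ * a * (q * q⁻¹) = q⁻¹ * (q * a) * q⁻¹ := by
      rw [hqc a]; noncomm_ring
    rw [mul_inv_cancel₀ hq, mul_one, ← mul_assoc, inv_mul_cancel₀ hq, one_mul] at h1
    exact h1
  have hq2 : ∀ a b : D, a * (q⁻¹ ^ 2 * b) = q⁻¹ ^ 2 * (a * b) := by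
    intro a b
    rw [sq]
    calc a * (q⁻¹ * q⁻¹ * b) = a * q⁻¹ * q⁻¹ * b := by noncomm_ring
      _ = q⁻¹ * a * q⁻¹ * b := by rw [← hq1 a]
      _ = q⁻¹ * (a * q⁻¹) * b := by rw [mul_assoc q⁻¹ a q⁻¹]
      _ = q⁻¹ * (q⁻¹ * a) * b := by rw [← hq1 a]
      _ = q⁻¹ * q⁻¹ * (a * b) := by noncomm_ring
  set X := K₁⁻¹ * E₁ * (F₂ * K₂) with hX
  set g := 1 - q⁻¹ * X with hgdef
  set g' := 1 - q * X with hg'def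
  -- K₂ commutes with K₁⁻¹ * E₁
  have hc : K₂ * (K₁⁻¹ * E₁) = (K₁⁻¹ * E₁) * K₂ := by
    rw [← mul_assoc, ← e₁, mul_assoc, ← e₂, ← mul_assoc]
  -- key relation: q⁻¹ * X * K₂ = K₂ * (q * X)
  have hKX : K₂ * X = q⁻¹ ^ 2 * (K₁⁻¹ * E₁ * (F₂ * K₂ * K₂)) := by
    calc K₂ * X = (K₂ * (K₁⁻¹ * E₁)) * (F₂ * K₂) := by rw [hX, ← mul_assoc]
      _ = (K₁⁻¹ * E₁) * ((K₂ * F₂) * K₂) := by rw [hc]; noncomm_ring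
      _ = (K₁⁻¹ * E₁) * ((q⁻¹ ^ 2 * (F₂ * K₂)) * K₂) := by rw [hKF₂]
      _ = (K₁⁻¹ * E₁) * (q⁻¹ ^ 2 * (F₂ * K₂ * K₂)) := by rw [mul_assoc (q⁻¹ ^ 2)]
      _ = q⁻¹ ^ 2 * (K₁⁻¹ * E₁ * (F₂ * K₂ * K₂)) := by rw [hq2]
  have hkey : q⁻¹ * X * K₂ = K₂ * (q * X) := by
    have h2 : K₂ * (q * X) = q * (K₂ * X) := by
      rw [← mul_assoc, ← hqc K₂, mul_assoc]
    have h7 : q * (q⁻¹ ^ 2 * (K₁⁻¹ * E₁ * (F₂ * K₂ * K₂)))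
        = q⁻¹ * (K₁⁻¹ * E₁ * (F₂ * K₂ * K₂)) := by
      rw [sq, ← mul_assoc, ← mul_assoc, ← mul_assoc q q⁻¹ q⁻¹, mul_inv_cancel₀ hq,
        one_mul]
      noncomm_ring
    rw [h2, hKX, h7, hX]
    noncomm_ring
  have hswap : g * K₂ = K₂ * g' := by
    rw [hgdef, hg'def, sub_mul, mul_sub, one_mul, mul_one, mul_assoc q⁻¹ X K₂, ← mul_assoc q⁻¹ X K₂, hkey]
  have hinvswap : g⁻¹ * K₂ = K₂ * g'⁻¹ := by
    calc g⁻¹ * K₂ = g⁻¹ * ((K₂ * g') * g'⁻¹) := by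
          rw [mul_assoc, mul_inv_cancel₀ hg', mul_one]
      _ = g⁻¹ * g * (K₂ * g'⁻¹) := by rw [← hswap]; noncomm_ring
      _ = K₂ * g'⁻¹ := by rw [inv_mul_cancel₀ hg, one_mul]
  -- first claim
  have hRK₂ : R K₂ = g⁻¹ * K₂ := by
    have h3 : K₁ * (g * R K₂) = K₁ * K₂ := by
      rw [← mul_assoc, ← hRK₁, ← map_mul, hRKK]
    have h4 : g * R K₂ = K₂ := mul_left_cancel₀ hK₁ h3
    conv_rhs => rw [← h4]
    rw [← mul_assoc, inv_mul_cancel₀ hg, one_mul]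
  refine ⟨hRK₂, ?_⟩
  -- second claim
  have h5 : E₁ * K₂ * (g⁻¹ * K₂) + R E₂ = K₁ * E₂ + E₁ := by
    rw [← hRE₁, ← hRK₂, ← map_mul, ← map_add, hRΔE]
  have h6 : R E₂ = K₁ * E₂ + E₁ - E₁ * K₂ * (g⁻¹ * K₂) := by
    rw [← h5]; noncomm_ring
  rw [h6, hinvswap]
  noncomm_ring
end

section
/- Let N ≥ 2, q = exp(2πi/N) = ω, n = N - 1. Then for invertible complex parameters b, z with appropriate nondegeneracy, the terminating q-hypergeometric transformation holds: ∑_{k=0}^{N-1} ((q^{-(N-1)};q)_k (b;q)_k / (q;q)_k) z^k = (bz/q)^{N-1} ∑_{k=0}^{N-1} ((q^{-(N-1)};q)_k (q/z;q)_k / (q;q)_k) (q/b)^k. -/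
/-!
Since `q⁻¹ ^ (N - 1) = q`, the factor `(q;q)_k` cancels, and the identity becomes
`F(b, z) = (bz/q)^{N-1} F(q/z, q/b)` for `F(c, w) = ∑_{k<N} (c;q)_k w^k`. With
`G(c, w) = ∑_{m<N} q^{m+1} (cw)^{N-1-m} ∏_{i=1}^{m} (w - q^i)` one checks termwise that
`(bz/q)^{N-1} G(q/z, q/b) = F(b, z)`, so it suffices to show `F = G`.
Both satisfy `H(c) = 1 - (1 - c^N) w^N + (1 - c) w H(cq)`. Iterating the homogeneous recurrence
of `F - G` `N` times and using `(c;q)_N = 1 - c^N` gives `(F - G)(c) = w^N (1 - c^N) (F - G)(c)`,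
so `F = G` whenever `w^N (1 - c^N) ≠ 1`.
-/

open Complex Finset Polynomial

section CommRing

variable {R S : Type*} [CommRing R] [CommRing S]

def qPochhammer (a q : R) (k : ℕ) : R := ∏ j ∈ range k, (1 - a * q ^ j)

def qPochhammerSum (N : ℕ) (q c w : R) : R := ∑ k ∈ range N, qPochhammer c q k * w ^ k

def qPochhammerDualSum (N : ℕ) (q c w : R) : R :=
  ∑ m ∈ range N, q ^ (m + 1) * (c * w) ^ (N - 1 - m) * ∏ i ∈ range m, (w - q ^ (i + 1))

lemma qPochhammer_succ' (a q : R) (k : ℕ) :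
    qPochhammer a q (k + 1) = (1 - a) * qPochhammer (a * q) q k := by
  rw [qPochhammer, prod_range_succ', pow_zero, mul_one, mul_comm, qPochhammer]
  exact congrArg _ (prod_congr rfl fun j _ => by ring)

lemma qPochhammerSum_succ (n : ℕ) (q c w : R) :
    qPochhammerSum (n + 1) q c w = 1 + (1 - c) * w * qPochhammerSum n q (c * q) w := by
  rw [qPochhammerSum, sum_range_succ', qPochhammerSum, mul_sum, add_comm]
  simp only [qPochhammer_succ']
  congr 1
  · simp [qPochhammer]
  · exact sum_congr rfl fun k _ => by ring

lemma map_qPochhammerSum (f : R →+* S) (N : ℕ) (q c w : R) :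
    f (qPochhammerSum N q c w) = qPochhammerSum N (f q) (f c) (f w) := by
  simp [qPochhammerSum, qPochhammer]

lemma map_qPochhammerDualSum (f : R →+* S) (N : ℕ) (q c w : R) :
    f (qPochhammerDualSum N q c w) = qPochhammerDualSum N (f q) (f c) (f w) := by
  simp [qPochhammerDualSum]

lemma eq_pow_mul_qPochhammer_of_forall_eq {q w : R} {D : R → R}
    (hD : ∀ c, D c = (1 - c) * w * D (c * q)) (c : R) (m : ℕ) :
    D c = w ^ m * qPochhammer c q m * D (c * q ^ m) := by
  induction m with
  | zero => simp [qPochhammer]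
  | succ m ih =>
    rw [ih, hD (c * q ^ m), mul_assoc c, ← pow_succ]
    simp only [qPochhammer, prod_range_succ]
    ring

end CommRing

namespace IsPrimitiveRoot

variable {R : Type*} [CommRing R] [IsDomain R] {q : R} {N : ℕ}

lemma prod_sub_pow_mul (hq : IsPrimitiveRoot q N) (hN : 0 < N) (x a : R) :
    ∏ i ∈ range N, (x - q ^ i * a) = x ^ N - a ^ N := by
  simpa [eval_prod] using (congrArg (eval x) (X_pow_sub_C_eq_prod hq hN (rfl : a ^ N = a ^ N))).symm

lemma qPochhammer_eq_one_sub_pow (hq : IsPrimitiveRoot q N) (hN : 0 < N) (c : R) :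
    qPochhammer c q N = 1 - c ^ N := by
  rw [qPochhammer, ← one_pow N, ← hq.prod_sub_pow_mul hN]
  exact prod_congr rfl fun i _ => by ring

lemma qPochhammerSum_recurrence (hq : IsPrimitiveRoot q N) (hN : 0 < N) (c w : R) :
    qPochhammerSum N q c w
      = 1 - (1 - c ^ N) * w ^ N + (1 - c) * w * qPochhammerSum N q (c * q) w := by
  obtain ⟨n, rfl⟩ : ∃ n, N = n + 1 := ⟨N - 1, by omega⟩
  have hprod := hq.qPochhammer_eq_one_sub_pow hN c
  rw [qPochhammer_succ'] at hprod
  have hsplit : qPochhammerSum (n + 1) q (c * q) w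
      = qPochhammerSum n q (c * q) w + qPochhammer (c * q) q n * w ^ n := sum_range_succ _ _
  rw [qPochhammerSum_succ, hsplit]
  linear_combination (-w ^ (n + 1)) * hprod

/-- `G(c) - (1 - c) w G(cq)` telescopes, with partial terms `(cw)^(N-m) ∏_{i<m} (w - q^(i+1))`. -/
lemma qPochhammerDualSum_recurrence (hq : IsPrimitiveRoot q N) (hN : 0 < N) (c w : R) :
    qPochhammerDualSum N q c w
      = 1 - (1 - c ^ N) * w ^ N + (1 - c) * w * qPochhammerDualSum N q (c * q) w := by
  set P : ℕ → R := fun m => ∏ i ∈ range m, (w - q ^ (i + 1))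
  have hPN : P N = w ^ N - 1 := by
    rw [← hq.pow_eq_one, ← hq.prod_sub_pow_mul hN]
    exact prod_congr rfl fun i _ => by ring
  have hterm : ∀ m ∈ range N, q ^ (m + 1) * (c * w) ^ (N - 1 - m) * P m
      - (1 - c) * w * (q ^ (m + 1) * (c * q * w) ^ (N - 1 - m) * P m)
      = (c * w) ^ (N - m) * P m - (c * w) ^ (N - (m + 1)) * P (m + 1) := by
    intro m hm
    obtain ⟨j, rfl⟩ : ∃ j, N = m + 1 + j := ⟨N - 1 - m, by simp at hm; omega⟩
    have hqj : q ^ (m + 1) * q ^ j = 1 := by rw [← pow_add, hq.pow_eq_one]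
    have hP : P (m + 1) = P m * (w - q ^ (m + 1)) := prod_range_succ _ _
    rw [show m + 1 + j - 1 - m = j by omega, show m + 1 + j - m = j + 1 by omega,
      show m + 1 + j - (m + 1) = j by omega, hP]
    linear_combination (-(1 - c) * w * (c * w) ^ j * P m) * hqj
  have htel := sum_range_sub' (fun m => (c * w) ^ (N - m) * P m) N
  rw [← sum_congr rfl hterm, sum_sub_distrib, ← mul_sum] at htel
  simp only [Nat.sub_zero, Nat.sub_self, pow_zero, one_mul, hPN, P, range_zero, prod_empty,
    mul_one] at htel
  rw [qPochhammerDualSum, qPochhammerDualSum]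
  linear_combination htel

lemma qPochhammerSum_eq_dualSum_of_ne (hq : IsPrimitiveRoot q N) (hN : 0 < N) {c w : R}
    (h : w ^ N * (1 - c ^ N) ≠ 1) : qPochhammerSum N q c w = qPochhammerDualSum N q c w := by
  set D : R → R := fun c => qPochhammerSum N q c w - qPochhammerDualSum N q c w
  have hD : ∀ c, D c = (1 - c) * w * D (c * q) := fun c => by
    simp only [D]
    linear_combination hq.qPochhammerSum_recurrence hN c w - hq.qPochhammerDualSum_recurrence hN c w
  have hfix := eq_pow_mul_qPochhammer_of_forall_eq hD c N
  rw [hq.pow_eq_one, mul_one, hq.qPochhammer_eq_one_sub_pow hN] at hfix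
  have hzero : D c * (1 - w ^ N * (1 - c ^ N)) = 0 := by linear_combination hfix
  exact sub_eq_zero.mp ((mul_eq_zero.mp hzero).resolve_right (sub_ne_zero.mpr h.symm))

/-- Both sides are polynomials in `w`, so it suffices to take `w = X`, which is generic. -/
lemma qPochhammerSum_eq_dualSum (hq : IsPrimitiveRoot q N) (hN : 0 < N) (c w : R) :
    qPochhammerSum N q c w = qPochhammerDualSum N q c w := by
  have hX : (X : R[X]) ^ N * (1 - C c ^ N) ≠ 1 := fun h => by
    simpa [hN.ne'] using congrArg (eval 0) h
  have hpoly := (hq.map_of_injective C_injective).qPochhammerSum_eq_dualSum_of_ne hN hX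
  have := congrArg (evalRingHom w) hpoly
  simpa only [map_qPochhammerSum, map_qPochhammerDualSum, coe_evalRingHom, eval_C, eval_X]
    using this

lemma qPochhammer_self_ne_zero (hq : IsPrimitiveRoot q N) {k : ℕ} (hk : k < N) :
    qPochhammer q q k ≠ 0 :=
  prod_ne_zero_iff.mpr fun j hj => by
    rw [← pow_succ', sub_ne_zero]
    exact (hq.pow_ne_one_of_pos_of_lt j.succ_ne_zero (by simp at hj; omega)).symm

end IsPrimitiveRoot

lemma mul_qPochhammerDualSum_div_div {K : Type*} [Field K] {q : K} {N : ℕ} (hqN : q ^ N = 1)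
    {b z : K} (hb : b ≠ 0) (hz : z ≠ 0) :
    (b * z / q) ^ (N - 1) * qPochhammerDualSum N q (q / z) (q / b) = qPochhammerSum N q b z := by
  rw [qPochhammerDualSum, qPochhammerSum, mul_sum]
  refine sum_congr rfl fun m hm => ?_
  obtain ⟨j, rfl⟩ : ∃ j, N = m + 1 + j := ⟨N - 1 - m, by simp at hm; omega⟩
  have hq0 : q ≠ 0 := by rintro rfl; simp at hqN
  have hqj : q ^ (m + 1) * q ^ j = 1 := by rw [← pow_add, hqN]
  have hpow : (b * z / q) ^ j * (q / z * (q / b)) ^ j = q ^ j := by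
    rw [← mul_pow]; congr 1; field_simp
  set P := ∏ i ∈ range m, (q / b - q ^ (i + 1))
  have hprod : (b * z / q) ^ m * P = z ^ m * qPochhammer b q m :=
    calc (b * z / q) ^ m * P = ∏ i ∈ range m, (b * z / q * (q / b - q ^ (i + 1))) := by
          rw [prod_mul_distrib, prod_const, card_range]
      _ = ∏ i ∈ range m, (z * (1 - b * q ^ i)) := prod_congr rfl fun i _ => by field_simp; ring
      _ = z ^ m * qPochhammer b q m := by
          rw [prod_mul_distrib, prod_const, card_range, qPochhammer]
  rw [show m + 1 + j - 1 - m = j by omega, show m + 1 + j - 1 = m + j by omega, pow_add]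
  linear_combination (q ^ (m + 1) * (b * z / q) ^ m * P) * hpow + ((b * z / q) ^ m * P) * hqj
    + hprod

/-- The terminating q-hypergeometric transformation (c → 0 limit of Gasper–Rahman
III.6) at `q = ω = exp(2πi/N)`, `n = N-1`: for nonzero `b, z`,
`∑_{k=0}^{N-1} (q^{-(N-1)};q)_k (b;q)_k z^k/(q;q)_k
  = (bz/q)^{N-1} ∑_{k=0}^{N-1} (q^{-(N-1)};q)_k (q/z;q)_k (q/b)^k/(q;q)_k`,
where `(a;q)_k = ∏_{j=0}^{k-1}(1 - a q^j)`. -/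
theorem stmt_15 (N : ℕ) (hN : 2 ≤ N)
    (q : ℂ) (hq : q = Complex.exp (2 * Real.pi * I / N))
    (qp : ℂ → ℕ → ℂ) (hqp : ∀ a k, qp a k = ∏ j ∈ Finset.range k, (1 - a * q ^ j))
    (b z : ℂ) (hb : b ≠ 0) (hz : z ≠ 0) :
    ∑ k ∈ Finset.range N, qp (q⁻¹ ^ (N - 1)) k * qp b k / qp q k * z ^ k
      = (b * z / q) ^ (N - 1) *
        ∑ k ∈ Finset.range N,
          qp (q⁻¹ ^ (N - 1)) k * qp (q / z) k / qp q k * (q / b) ^ k := by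
  have hprim : IsPrimitiveRoot q N := hq ▸ Complex.isPrimitiveRoot_exp N (by omega)
  have hqp_eq : qp = fun a k => qPochhammer a q k := funext₂ hqp
  subst hqp_eq
  have hinv : q⁻¹ ^ (N - 1) = q := by
    rw [inv_pow]
    refine inv_eq_of_mul_eq_one_right ?_
    rw [← pow_succ, Nat.sub_add_cancel (by omega), hprim.pow_eq_one]
  have hcancel : ∀ a x : ℂ, ∑ k ∈ range N, qPochhammer q q k * qPochhammer a q k
      / qPochhammer q q k * x ^ k = qPochhammerSum N q a x := fun a x =>
    sum_congr rfl fun k hk => by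
      rw [mul_div_cancel_left₀ _ (hprim.qPochhammer_self_ne_zero (mem_range.mp hk))]
  simp only [hinv, hcancel]
  rw [hprim.qPochhammerSum_eq_dualSum (by omega) (q / z) (q / b),
    mul_qPochhammerDualSum_div_div hprim.pow_eq_one hb hz]
end

section
/- Let N ≥ 2, ω = exp(2πi/N), and let ζ⁰, ζ¹ ∈ ℂ satisfy e^{2πiζ¹}(1 - e^{2πiζ⁰}) = 1 with ω^{ζ⁰+k} ≠ 1 for all k. Define Λ(n) for n ∈ ℤ by Λ(0) = 1 and Λ(n) = ω^{-ζ¹} Λ(n-1)/(1 - ω^{ζ⁰+n}) (so Λ is N-periodic). Then for all integers k, l and m ∈ ℤ: (1/N)·ω^{-(N-1)(ζ⁰+ζ¹)} ∑_{n=0}^{N-1} ω^{n+k} Λ(n+k)/Λ(n+l-1) = δ(k ≡ l mod N)·1, i.e., ∑_{n=0}^{N-1} ω^n Λ(n+k)/Λ(n+l-1) = δ_{l≡k} · N · ω^{-k} · ω^{(N-1)(ζ⁰+ζ¹)}. -/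
/-!
Write `q = ω^{ζ⁰}` and `c = ω^{-ζ¹}`, so that the recursion reads `Λ(n) (1 - q ωⁿ) = c Λ(n-1)`
and the flatness condition reads `c^N = 1 - q^N`. Iterating the recursion over a full period
gives `Λ(N) ∏_{j=1}^{N} (1 - q ω^j) = c^N`, and `∏_j (1 - q ω^j) = 1 - q^N`, so `Λ` is
`N`-periodic.

For `k ≡ l` the summand is `c ωⁿ / (1 - a ωⁿ)` with `a = q ω^k`; expanding
`1 / (1 - a ωⁿ) = (∑_{j<N} (a ωⁿ)^j) / (1 - a^N)` and using orthogonality of characters of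
`ℤ/N`, only `j = N - 1` survives. For `k ≢ l`, the recursion at `n + k` and at `n + l - 1`
shows that `(q ω^k - q ω^l) ωⁿ Λ(n+k)/Λ(n+l-1)` is the difference `F(n) - F(n-1)` of an
`N`-periodic function, so its sum over a period vanishes.
-/

open Complex Finset

namespace IsPrimitiveRoot

theorem prod_one_sub_mul_pow {R : Type*} [CommRing R] [IsDomain R] {N : ℕ} {ω : R}
    (hω : IsPrimitiveRoot ω N) (hN : N ≠ 0) (y : R) :
    ∏ j ∈ range N, (1 - y * ω ^ j) = 1 - y ^ N := by
  have h := congrArg (Polynomial.eval 1)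
    (X_pow_sub_C_eq_prod hω (Nat.pos_of_ne_zero hN) (rfl : y ^ N = y ^ N))
  simpa [Polynomial.eval_prod, mul_comm] using h.symm

variable {K : Type*} [Field K] {N : ℕ} {ω : K}

theorem sum_pow_div_one_sub_mul_pow (hω : IsPrimitiveRoot ω N) {a : K} (ha : a ^ N ≠ 1) :
    ∑ n ∈ range N, ω ^ n / (1 - a * ω ^ n) = N * a ^ (N - 1) / (1 - a ^ N) := by
  have hN : N ≠ 0 := by rintro rfl; exact ha (pow_zero a)
  have hden : 1 - a ^ N ≠ 0 := sub_ne_zero.2 (Ne.symm ha)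
  have hterm : ∀ n ∈ range N, ω ^ n / (1 - a * ω ^ n)
      = (∑ j ∈ range N, a ^ j * (ω ^ (j + 1)) ^ n) / (1 - a ^ N) := by
    intro n _
    have hpow : (a * ω ^ n) ^ N = a ^ N := by
      rw [mul_pow, pow_right_comm, hω.pow_eq_one, one_pow, mul_one]
    have hgeom := mul_neg_geom_sum (a * ω ^ n) N
    have hne : 1 - a * ω ^ n ≠ 0 := by
      intro h0
      rw [h0, zero_mul, hpow] at hgeom
      exact hden hgeom.symm
    rw [div_eq_div_iff hne hden, ← hpow, ← hgeom, mul_comm (1 - a * ω ^ n), ← mul_assoc,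
      mul_sum]
    congr 1
    exact sum_congr rfl fun j _ => by ring
  have hmem : N - 1 ∈ range N := mem_range.2 (Nat.sub_one_lt hN)
  have hvanish :
      ∀ j ∈ range N, j ≠ N - 1 → a ^ j * ∑ n ∈ range N, (ω ^ (j + 1)) ^ n = 0 := by
    intro j hj hjN
    have hne : ω ^ (j + 1) ≠ 1 :=
      hω.pow_ne_one_of_pos_of_lt (Nat.succ_ne_zero j) (by have := mem_range.1 hj; omega)
    rw [geom_sum_eq hne, pow_right_comm, hω.pow_eq_one, one_pow, sub_self, zero_div, mul_zero]
  rw [sum_congr rfl hterm, ← sum_div, sum_comm]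
  simp_rw [← mul_sum]
  rw [sum_eq_single_of_mem (N - 1) hmem hvanish, Nat.sub_one_add_one hN, hω.pow_eq_one]
  simp [mul_comm]

end IsPrimitiveRoot

theorem Function.Periodic.sum_range_sub_eq_zero {G : Type*} [AddCommGroup G] {F : ℤ → G}
    {N : ℕ} (hF : Function.Periodic F N) : ∑ n ∈ range N, (F n - F (n - 1)) = 0 := by
  have h := sum_range_sub (fun n : ℕ => F ((n : ℤ) - 1)) N
  push_cast at h
  simp only [add_sub_cancel_right] at h
  rw [h, sub_eq_zero, sub_eq_neg_add, hF]

section CyclicDilog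

variable {K : Type*} [Field K] {N : ℕ} {ω q c : K} {Λ : ℤ → K}

/-- The recursion `Λ(n) = ω^{-ζ¹} Λ(n-1) / (1 - ω^{ζ⁰+n})` with `q = ω^{ζ⁰}`, `c = ω^{-ζ¹}`,
cleared of its denominator. -/
def IsCyclicDilog (ω q c : K) (Λ : ℤ → K) : Prop :=
  ∀ n : ℤ, Λ n * (1 - q * ω ^ n) = c * Λ (n - 1)

namespace IsCyclicDilog

theorem ne_zero (hΛ : IsCyclicDilog ω q c Λ) (hq : ∀ n : ℤ, q * ω ^ n ≠ 1) (hc : c ≠ 0)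
    (h0 : Λ 0 ≠ 0) (n : ℤ) : Λ n ≠ 0 := by
  induction n using Int.induction_on with
  | zero => exact h0
  | succ i ih =>
    intro hi
    have h := hΛ (i + 1)
    rw [hi, zero_mul, add_sub_cancel_right] at h
    exact mul_ne_zero hc ih h.symm
  | pred i ih =>
    intro hi
    have h := hΛ (-i)
    rw [hi, mul_zero] at h
    exact mul_ne_zero ih (sub_ne_zero.2 (hq _).symm) h

theorem ext {Λ' : ℤ → K} (hΛ : IsCyclicDilog ω q c Λ) (hΛ' : IsCyclicDilog ω q c Λ')
    (hq : ∀ n : ℤ, q * ω ^ n ≠ 1) (hc : c ≠ 0) (h0 : Λ 0 = Λ' 0) : Λ = Λ' := by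
  funext n
  induction n using Int.induction_on with
  | zero => exact h0
  | succ i ih =>
    have h := hΛ (i + 1)
    have h' := hΛ' (i + 1)
    rw [add_sub_cancel_right, ih] at h
    rw [add_sub_cancel_right] at h'
    exact mul_right_cancel₀ (sub_ne_zero.2 (hq _).symm) (h.trans h'.symm)
  | pred i ih =>
    have h := hΛ (-i)
    rw [ih, hΛ' (-i)] at h
    exact (mul_left_cancel₀ hc h).symm

theorem mul_prod_eq (hΛ : IsCyclicDilog ω q c Λ) (m : ℕ) :
    Λ m * ∏ j ∈ range m, (1 - q * ω * ω ^ j) = c ^ m * Λ 0 := by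
  induction m with
  | zero => simp
  | succ m ih =>
    have h := hΛ (m + 1)
    rw [add_sub_cancel_right, ← Nat.cast_succ, zpow_natCast, pow_succ'] at h
    rw [prod_range_succ]
    linear_combination (∏ j ∈ range m, (1 - q * ω * ω ^ j)) * h + c * ih

theorem periodic (hΛ : IsCyclicDilog ω q c Λ) (hω : IsPrimitiveRoot ω N)
    (hq : ∀ n : ℤ, q * ω ^ n ≠ 1) (hc : c ≠ 0) (hflat : c ^ N = 1 - q ^ N) :
    Function.Periodic Λ N := by
  have hN : N ≠ 0 := by rintro rfl; simp at hflat
  have hΛN : Λ N = Λ 0 := by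
    have h := hΛ.mul_prod_eq N
    rw [hω.prod_one_sub_mul_pow hN, mul_pow, hω.pow_eq_one, mul_one, ← hflat, mul_comm] at h
    exact mul_left_cancel₀ (pow_ne_zero N hc) h
  have hshift : IsCyclicDilog ω q c (fun n => Λ (n + N)) := fun n => by
    show Λ (n + N) * _ = c * Λ (n - 1 + N)
    rw [sub_add_eq_add_sub, ← hΛ, zpow_add₀ (hω.ne_zero hN), zpow_natCast, hω.pow_eq_one,
      mul_one]
  exact congrFun (hshift.ext hΛ hq hc (by rw [zero_add, hΛN]))

theorem sum_pow_mul_div_pred (hΛ : IsCyclicDilog ω q c Λ) (hω : IsPrimitiveRoot ω N)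
    (hq : ∀ n : ℤ, q * ω ^ n ≠ 1) (hc : c ≠ 0) (hflat : c ^ N = 1 - q ^ N)
    (hne : ∀ n, Λ n ≠ 0) (k : ℤ) :
    ∑ n ∈ range N, ω ^ n * Λ (n + k) / Λ (n + k - 1)
      = N * (ω ^ k)⁻¹ * (q / c) ^ (N - 1) := by
  have hN : N ≠ 0 := by rintro rfl; simp at hflat
  have hω0 : ω ≠ 0 := hω.ne_zero hN
  have hωk : (ω ^ k) ^ N = 1 := by
    rw [← zpow_natCast, ← zpow_mul, mul_comm, zpow_mul, zpow_natCast, hω.pow_eq_one, one_zpow]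
  have ha : (q * ω ^ k) ^ N = q ^ N := by rw [mul_pow, hωk, mul_one]
  have hterm : ∀ n ∈ range N, ω ^ n * Λ (n + k) / Λ (n + k - 1)
      = c * (ω ^ n / (1 - q * ω ^ k * ω ^ n)) := by
    intro n _
    have hshift : q * ω ^ ((n : ℤ) + k) = q * ω ^ k * ω ^ n := by
      rw [zpow_add₀ hω0, zpow_natCast]; ring
    have h := hΛ (n + k)
    have hden := sub_ne_zero.2 (hq (n + k)).symm
    rw [hshift] at h hden
    rw [← mul_div_assoc, div_eq_div_iff (hne _) hden]
    linear_combination ω ^ n * h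
  rw [sum_congr rfl hterm, ← mul_sum, hω.sum_pow_div_one_sub_mul_pow, ha, ← hflat]
  · obtain ⟨M, rfl⟩ : ∃ M, N = M + 1 := ⟨N - 1, by omega⟩
    have hωkM : (ω ^ k) ^ M = (ω ^ k)⁻¹ :=
      eq_inv_of_mul_eq_one_left (by rw [← pow_succ, hωk])
    rw [Nat.add_sub_cancel, mul_pow, hωkM, div_pow, pow_succ]
    field_simp
  · rw [ha, ← sub_ne_zero, ← neg_sub, neg_ne_zero, ← hflat]
    exact pow_ne_zero N hc

theorem sum_pow_mul_div_eq_zero (hΛ : IsCyclicDilog ω q c Λ) (hω : IsPrimitiveRoot ω N)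
    (hq0 : q ≠ 0) (hper : Function.Periodic Λ N) (hne : ∀ n, Λ n ≠ 0) {k l : ℤ}
    (hkl : ¬(N : ℤ) ∣ k - l) :
    ∑ n ∈ range N, ω ^ n * Λ (n + k) / Λ (n + l - 1) = 0 := by
  obtain rfl | hN := eq_or_ne N 0
  · simp
  have hω0 : ω ≠ 0 := hω.ne_zero hN
  set r : ℤ → K := fun n => Λ (n + k) / Λ (n + l - 1)
  set F : ℤ → K := fun n => r n * (1 - q * ω ^ l * ω ^ n)
  have hF : Function.Periodic F N := fun n => by
    show Λ (n + N + k) / Λ (n + N + l - 1) * (1 - q * ω ^ l * ω ^ (n + N)) = F n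
    rw [add_right_comm n, hper, show n + N + l - 1 = n + l - 1 + N by ring, hper,
      zpow_add₀ hω0, zpow_natCast, hω.pow_eq_one, mul_one]
  -- `F (n - 1) = r n * (1 - q ω ^ k ω ^ n)` is the recursion at `n + k` and at `n + l - 1`
  have hstep : ∀ n : ℤ, F n - F (n - 1) = (q * ω ^ k - q * ω ^ l) * (ω ^ n * r n) := by
    intro n
    have h1 := hΛ (n + k)
    have h2 := hΛ (n + l - 1)
    simp only [F, r]
    rw [show n - 1 + k = n + k - 1 by ring, show n - 1 + l - 1 = n + l - 1 - 1 by ring]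
    have e1 : ω ^ (n + k) = ω ^ k * ω ^ n := by rw [zpow_add₀ hω0, mul_comm]
    have e2 : ω ^ (n + l - 1) = ω ^ l * ω ^ (n - 1) := by
      rw [← zpow_add₀ hω0]; ring_nf
    rw [e1] at h1
    rw [e2] at h2
    have d1 := hne (n + l - 1)
    have d2 := hne (n + l - 1 - 1)
    field_simp
    linear_combination Λ (n + l - 1 - 1) * h1 - Λ (n + k - 1) * h2
  have hab : q * ω ^ k - q * ω ^ l ≠ 0 := by
    rw [← mul_sub]
    refine mul_ne_zero hq0 (sub_ne_zero.2 fun h => hkl ?_)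
    rw [← hω.zpow_eq_one_iff_dvd, zpow_sub₀ hω0, h, div_self (zpow_ne_zero l hω0)]
  have hsum := hF.sum_range_sub_eq_zero
  simp_rw [hstep, ← mul_sum, zpow_natCast] at hsum
  simpa [mul_div_assoc, hab] using hsum

theorem sum_pow_mul_div (hΛ : IsCyclicDilog ω q c Λ) (hω : IsPrimitiveRoot ω N)
    (hq : ∀ n : ℤ, q * ω ^ n ≠ 1) (hq0 : q ≠ 0) (hc : c ≠ 0) (hflat : c ^ N = 1 - q ^ N)
    (h0 : Λ 0 ≠ 0) (k l : ℤ) :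
    ∑ n ∈ range N, ω ^ n * Λ (n + k) / Λ (n + l - 1)
      = if (N : ℤ) ∣ k - l then N * (ω ^ k)⁻¹ * (q / c) ^ (N - 1) else 0 := by
  have hper := hΛ.periodic hω hq hc hflat
  have hne := hΛ.ne_zero hq hc h0
  split_ifs with hkl
  · obtain ⟨t, ht⟩ := hkl
    have hshift : ∀ n : ℤ, Λ (n + l - 1) = Λ (n + k - 1) := fun n => by
      rw [show n + l - 1 = n + k - 1 - t • (N : ℤ) by rw [smul_eq_mul]; linear_combination -ht,
        hper.sub_zsmul_eq]
    simp_rw [hshift]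
    exact hΛ.sum_pow_mul_div_pred hω hq hc hflat hne k
  · exact hΛ.sum_pow_mul_div_eq_zero hω hq0 hper hne hkl

end IsCyclicDilog

end CyclicDilog

/-- `ω ^ ζ` for `ω = exp (2πi / N)` and complex `ζ`, with the branch `exp (2πiζ / N)`. -/
noncomputable def rootPow (N : ℕ) (ζ : ℂ) : ℂ := cexp (2 * Real.pi * I * ζ / N)

section RootPow

variable (N : ℕ)

theorem rootPow_ne_zero (ζ : ℂ) : rootPow N ζ ≠ 0 := Complex.exp_ne_zero _

theorem rootPow_add (ζ ξ : ℂ) : rootPow N (ζ + ξ) = rootPow N ζ * rootPow N ξ := by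
  rw [rootPow, rootPow, rootPow, ← Complex.exp_add]; ring_nf

theorem rootPow_neg (ζ : ℂ) : rootPow N (-ζ) = (rootPow N ζ)⁻¹ := by
  rw [rootPow, rootPow, ← Complex.exp_neg]; ring_nf

theorem rootPow_intCast_mul (n : ℤ) (ζ : ℂ) : rootPow N (n * ζ) = rootPow N ζ ^ n := by
  rw [rootPow, rootPow, ← Complex.exp_int_mul]; ring_nf

theorem rootPow_natCast_mul (m : ℕ) (ζ : ℂ) : rootPow N (m * ζ) = rootPow N ζ ^ m := by
  rw [rootPow, rootPow, ← Complex.exp_nat_mul]; ring_nf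

variable {N}

theorem rootPow_pow_self (hN : N ≠ 0) (ζ : ℂ) :
    rootPow N ζ ^ N = cexp (2 * Real.pi * I * ζ) := by
  rw [← rootPow_natCast_mul, rootPow]; congr 1; field_simp

theorem isPrimitiveRoot_rootPow_one (hN : N ≠ 0) : IsPrimitiveRoot (rootPow N 1) N := by
  simpa [rootPow] using isPrimitiveRoot_exp N hN

end RootPow

theorem stmt_16_general (N : ℕ) (ζ0 ζ1 : ℂ)
    (ωpow : ℂ → ℂ) (hωpow : ∀ ζ : ℂ, ωpow ζ = Complex.exp (2 * Real.pi * I * ζ / N))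
    (hflat : Complex.exp (2 * Real.pi * I * ζ1) *
      (1 - Complex.exp (2 * Real.pi * I * ζ0)) = 1)
    (hnz : ∀ k : ℤ, ωpow (ζ0 + (k : ℂ)) ≠ 1)
    (Λ : ℤ → ℂ) (hΛ0 : Λ 0 = 1)
    (hrec : ∀ n : ℤ, Λ n = ωpow (-ζ1) * Λ (n - 1) / (1 - ωpow (ζ0 + (n : ℂ)))) :
    ∀ k l : ℤ,
      ∑ n ∈ Finset.range N, ωpow (n : ℂ) * Λ ((n : ℤ) + k) / Λ ((n : ℤ) + l - 1)
        = (if (k - l) % (N : ℤ) = 0 then 1 else 0) * N * ωpow (-(k : ℂ)) *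
          ωpow ((N - 1 : ℂ) * (ζ0 + ζ1)) := by
  intro k l
  obtain rfl : ωpow = rootPow N := funext hωpow
  -- `rootPow 0 ζ = exp (x / 0) = 1`
  have hN : N ≠ 0 := by rintro rfl; simpa [rootPow] using hnz 0
  set ω := rootPow N 1
  set q := rootPow N ζ0
  have hpow (n : ℤ) : rootPow N n = ω ^ n := by rw [← rootPow_intCast_mul, mul_one]
  have hq (n : ℤ) : q * ω ^ n ≠ 1 := by rw [← hpow, ← rootPow_add]; exact hnz n
  have hΛ : IsCyclicDilog ω q (rootPow N (-ζ1)) Λ := fun n => by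
    rw [hrec n, rootPow_add, hpow, div_mul_cancel₀ _ (sub_ne_zero.2 (hq n).symm)]
  have hcN : rootPow N (-ζ1) ^ N = 1 - q ^ N := by
    rw [rootPow_pow_self hN, rootPow_pow_self hN, mul_neg, Complex.exp_neg]
    exact (eq_inv_of_mul_eq_one_right hflat).symm
  have hsum := hΛ.sum_pow_mul_div (isPrimitiveRoot_rootPow_one hN) hq (rootPow_ne_zero N ζ0)
    (rootPow_ne_zero N _) hcN (hΛ0 ▸ one_ne_zero) k l
  rw [rootPow_neg, div_inv_eq_mul, ← rootPow_add, ← rootPow_natCast_mul,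
    Nat.cast_pred (Nat.pos_of_ne_zero hN), ← zpow_neg, ← hpow, Int.cast_neg] at hsum
  simp only [← zpow_natCast, ← hpow, Int.cast_natCast] at hsum
  rw [hsum]
  by_cases hkl : (N : ℤ) ∣ k - l
  · rw [if_pos hkl, if_pos (Int.emod_eq_zero_of_dvd hkl), one_mul]
  · rw [if_neg hkl, if_neg (mt Int.dvd_of_emod_eq_zero hkl), zero_mul, zero_mul, zero_mul]

/-- The orthogonality lemma for the cyclic quantum dilogarithm: with
`e^{2πiζ¹} = (1 - e^{2πiζ⁰})⁻¹`, `ω^{ζ⁰+k} ≠ 1` for all `k`, and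
`Λ(n) = ω^{-ζ¹} Λ(n-1)/(1 - ω^{ζ⁰+n})`, `Λ(0) = 1`, for all integers `k, l`:
`∑_{n=0}^{N-1} ω^n Λ(n+k)/Λ(n+l-1) = δ_{l≡k (mod N)} · N · ω^{-k} ·
ω^{(N-1)(ζ⁰+ζ¹)}`. -/
theorem stmt_16 (N : ℕ) (hN : 2 ≤ N) (ζ0 ζ1 : ℂ)
    (ωpow : ℂ → ℂ) (hωpow : ∀ ζ : ℂ, ωpow ζ = Complex.exp (2 * Real.pi * I * ζ / N))
    (hflat : Complex.exp (2 * Real.pi * I * ζ1) *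
      (1 - Complex.exp (2 * Real.pi * I * ζ0)) = 1)
    (hnz : ∀ k : ℤ, ωpow (ζ0 + (k : ℂ)) ≠ 1)
    (Λ : ℤ → ℂ) (hΛ0 : Λ 0 = 1)
    (hrec : ∀ n : ℤ, Λ n = ωpow (-ζ1) * Λ (n - 1) / (1 - ωpow (ζ0 + (n : ℂ)))) :
    ∀ k l : ℤ,
      ∑ n ∈ Finset.range N, ωpow (n : ℂ) * Λ ((n : ℤ) + k) / Λ ((n : ℤ) + l - 1)
        = (if (k - l) % (N : ℤ) = 0 then 1 else 0) * N * ωpow (-(k : ℂ)) *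
          ωpow ((N - 1 : ℂ) * (ζ0 + ζ1)) :=
  stmt_16_general N ζ0 ζ1 ωpow hωpow hflat hnz Λ hΛ0 hrec
end
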